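/- Let A be a real m×n matrix, x, p ∈ ℝⁿ with ⟪x - p, p⟫ = 0, and b = A·x. Let W be the subspace of ℝⁿ spanned by p together with the rows of A, and let q be the orthogonal projection of x onto W. Then ‖p‖ ≤ ‖q‖, and if A·p ≠ b then ‖p‖ < ‖q‖ strictly. -/

import Mathlib

open scoped RealInnerProductSpace
open Matrix

/-! Since `p ∈ W`, both `x - p` and `x - q` are orthogonal to `p`, hence so is `q - p`, and
Pythagoras gives `‖q‖² = ‖q - p‖² + ‖p‖²`. If `q = p`, then `x - p` is orthogonal to every row
of `A`, i.e. `A p = A x = b`. -/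

section Pythagoras

variable {F : Type*} [NormedAddCommGroup F] [InnerProductSpace ℝ F] {p q : F}

theorem norm_sq_eq_norm_sub_sq_add_norm_sq_of_inner_sub_self_eq_zero (h : ⟪q - p, p⟫ = 0) :
    ‖q‖ ^ 2 = ‖q - p‖ ^ 2 + ‖p‖ ^ 2 := by
  simpa only [sub_add_cancel, sq] using norm_add_sq_eq_norm_sq_add_norm_sq_real h

theorem norm_le_norm_of_inner_sub_self_eq_zero (h : ⟪q - p, p⟫ = 0) : ‖p‖ ≤ ‖q‖ := by
  refine (sq_le_sq₀ (norm_nonneg p) (norm_nonneg q)).1 ?_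
  rw [norm_sq_eq_norm_sub_sq_add_norm_sq_of_inner_sub_self_eq_zero h]
  exact le_add_of_nonneg_left (sq_nonneg _)

theorem norm_lt_norm_of_inner_sub_self_eq_zero (h : ⟪q - p, p⟫ = 0) (hne : q ≠ p) :
    ‖p‖ < ‖q‖ := by
  refine (sq_lt_sq₀ (norm_nonneg p) (norm_nonneg q)).1 ?_
  rw [norm_sq_eq_norm_sub_sq_add_norm_sq_of_inner_sub_self_eq_zero h]
  exact lt_add_of_pos_left _ (pow_pos (norm_pos_iff.2 (sub_ne_zero.2 hne)) 2)

end Pythagoras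

namespace Matrix

variable {ι κ : Type*} [Fintype κ]

theorem mulVec_ofLp_apply_eq_inner (A : Matrix ι κ ℝ) (v : EuclideanSpace ℝ κ) (i : ι) :
    (A *ᵥ v.ofLp) i = ⟪WithLp.toLp 2 (A i), v⟫ := by
  rw [EuclideanSpace.inner_eq_star_dotProduct, star_trivial, dotProduct_comm]
  rfl

theorem mulVec_ofLp_eq_of_inner_sub_row_eq_zero (A : Matrix ι κ ℝ) {u v : EuclideanSpace ℝ κ}
    (h : ∀ i, ⟪u - v, WithLp.toLp 2 (A i)⟫ = 0) : A *ᵥ u.ofLp = A *ᵥ v.ofLp := by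
  ext i
  rw [mulVec_ofLp_apply_eq_inner, mulVec_ofLp_apply_eq_inner, ← sub_eq_zero, ← inner_sub_right,
    real_inner_comm, h i]

end Matrix

theorem ap_norm_increases {m n : ℕ}
    (A : Matrix (Fin m) (Fin n) ℝ)
    (x p : EuclideanSpace ℝ (Fin n)) (horth : ⟪x - p, p⟫ = 0)
    (b : EuclideanSpace ℝ (Fin m)) (hb : b = A.mulVec x)
    (W : Submodule ℝ (EuclideanSpace ℝ (Fin n)))
    (hW : W = Submodule.span ℝ {p} ⊔
        Submodule.span ℝ (Set.range fun i : Fin m => (WithLp.toLp 2 (A i) : EuclideanSpace ℝ (Fin n))))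
    (q : EuclideanSpace ℝ (Fin n))
    (hqorth : ∀ w ∈ W, ⟪x - q, w⟫ = 0) :
    ‖p‖ ≤ ‖q‖ ∧ ((WithLp.toLp 2 (A.mulVec p) : EuclideanSpace ℝ (Fin m)) ≠ b → ‖p‖ < ‖q‖) := by
  have hpW : p ∈ W := hW ▸ Submodule.mem_sup_left (Submodule.mem_span_singleton_self p)
  have hrowW (i : Fin m) : WithLp.toLp 2 (A i) ∈ W :=
    hW ▸ Submodule.mem_sup_right (Submodule.subset_span ⟨i, rfl⟩)
  have hqp : ⟪q - p, p⟫ = 0 := by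
    rw [← sub_sub_sub_cancel_left p q x, inner_sub_left, horth, hqorth p hpW, sub_zero]
  refine ⟨norm_le_norm_of_inner_sub_self_eq_zero hqp,
    fun hAp => norm_lt_norm_of_inner_sub_self_eq_zero hqp ?_⟩
  rintro rfl
  refine hAp (WithLp.ofLp_injective 2 ?_)
  rw [hb]
  exact (A.mulVec_ofLp_eq_of_inner_sub_row_eq_zero fun i => hqorth _ (hrowW i)).symm
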